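/- For every real t > 0 and every real p with 0 < p ≤ 1, one has (t+2)^p / ((t+2)^p − (t+1)^p) ≥ (t+1)^p / ((t+1)^p − t^p) + 1/p. Equivalently, the function f(t) = (t+1)^p/((t+1)^p − t^p) satisfies f(t+1) ≥ f(t) + 1/p for all t > 0. -/

import Mathlib

/-!
The function `f t = (t+1)^p / ((t+1)^p - t^p)` has derivative
`p ((t+1) t)^(p-1) / ((t+1)^p - t^p)^2`, and this is at least `1/p` because
`(t+1)^p - t^p ≤ p ((t+1) t)^((p-1)/2)`. Writing `t+1 = exp (m+s)`, `t = exp (m-s)`, the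
latter inequality becomes `sinh (p s) ≤ p sinh s`, which is convexity of `sinh` on `[0, ∞)`
together with `sinh 0 = 0`. The mean value theorem on `[t, t+1]` then gives `f (t+1) ≥ f t + 1/p`.
-/

open Real Set

lemma convexOn_sinh_Ici : ConvexOn ℝ (Ici 0) sinh := by
  refine MonotoneOn.convexOn_of_deriv (convex_Ici 0) continuous_sinh.continuousOn
    differentiable_sinh.differentiableOn ?_
  rw [Real.deriv_sinh, interior_Ici]
  intro x hx y hy hxy
  exact cosh_le_cosh.2 (by rwa [abs_of_pos hx, abs_of_pos hy])

lemma sinh_mul_le_mul_sinh {p s : ℝ} (hp0 : 0 ≤ p) (hp1 : p ≤ 1) (hs : 0 ≤ s) :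
    sinh (p * s) ≤ p * sinh s := by
  simpa using
    convexOn_sinh_Ici.2 (mem_Ici.2 hs) (mem_Ici.2 le_rfl) hp0 (sub_nonneg.2 hp1) (by ring)

lemma exp_mul_sub_exp_mul_le {p u v : ℝ} (hp0 : 0 ≤ p) (hp1 : p ≤ 1) (hvu : v ≤ u) :
    exp (p * u) - exp (p * v) ≤ p * exp ((p - 1) * ((u + v) / 2)) * (exp u - exp v) := by
  set m := (u + v) / 2
  set s := (u - v) / 2
  have hu : u = m + s := by ring
  have hv : v = m - s := by ring
  calc exp (p * u) - exp (p * v) = 2 * exp (p * m) * sinh (p * s) := by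
        rw [sinh_eq, hu, hv, mul_add, mul_sub, exp_add, exp_sub, exp_neg]; field_simp
    _ ≤ 2 * exp (p * m) * (p * sinh s) :=
        mul_le_mul_of_nonneg_left (sinh_mul_le_mul_sinh hp0 hp1 (by linarith)) (by positivity)
    _ = p * exp ((p - 1) * m) * (exp u - exp v) := by
        rw [sinh_eq, hu, hv, sub_mul, exp_sub, exp_add, exp_sub, exp_neg, one_mul]
        field_simp

lemma rpow_sub_rpow_le {p a b : ℝ} (hp0 : 0 ≤ p) (hp1 : p ≤ 1) (hb : 0 < b) (hba : b ≤ a) :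
    a ^ p - b ^ p ≤ p * (a * b) ^ ((p - 1) / 2) * (a - b) := by
  have ha : 0 < a := hb.trans_le hba
  have h := exp_mul_sub_exp_mul_le hp0 hp1 (log_le_log hb hba)
  rw [exp_log ha, exp_log hb] at h
  rw [rpow_def_of_pos ha, rpow_def_of_pos hb, rpow_def_of_pos (mul_pos ha hb),
    log_mul ha.ne' hb.ne']
  convert h using 3 <;> ring_nf

lemma hasDerivAt_rpow_div_rpow_sub_rpow {p x : ℝ} (hp : 0 < p) (hx : 0 < x) :
    HasDerivAt (fun y : ℝ => (y + 1) ^ p / ((y + 1) ^ p - y ^ p))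
      (p * ((x + 1) * x) ^ (p - 1) / ((x + 1) ^ p - x ^ p) ^ 2) x := by
  have hx1 : 0 < x + 1 := by linarith
  have hA : HasDerivAt (fun y : ℝ => (y + 1) ^ p) (p * (x + 1) ^ (p - 1)) x := by
    simpa using ((hasDerivAt_id x).add_const 1).rpow_const (p := p) (Or.inl hx1.ne')
  have hB : HasDerivAt (fun y : ℝ => y ^ p) (p * x ^ (p - 1)) x :=
    hasDerivAt_rpow_const (Or.inl hx.ne')
  have hD : (x + 1) ^ p - x ^ p ≠ 0 := (sub_pos.2 (rpow_lt_rpow hx.le (lt_add_one x) hp)).ne'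
  refine (hA.div (hA.sub hB) hD).congr_deriv ?_
  rw [Pi.sub_apply, mul_rpow hx1.le hx.le, rpow_sub_one hx1.ne', rpow_sub_one hx.ne']
  field_simp
  ring

lemma one_div_le_deriv_rpow_div_rpow_sub_rpow {p x : ℝ} (hp0 : 0 < p) (hp1 : p ≤ 1)
    (hx : 0 < x) :
    1 / p ≤ p * ((x + 1) * x) ^ (p - 1) / ((x + 1) ^ p - x ^ p) ^ 2 := by
  have hD : 0 < (x + 1) ^ p - x ^ p := sub_pos.2 (rpow_lt_rpow hx.le (lt_add_one x) hp0)
  have hle := rpow_sub_rpow_le hp0.le hp1 hx (lt_add_one x).le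
  rw [add_sub_cancel_left, mul_one] at hle
  have hsq : (((x + 1) * x) ^ ((p - 1) / 2)) ^ 2 = ((x + 1) * x) ^ (p - 1) := by
    rw [← rpow_natCast, ← rpow_mul (by positivity)]; norm_num
  rw [div_le_div_iff₀ hp0 (by positivity)]
  calc 1 * ((x + 1) ^ p - x ^ p) ^ 2 ≤ (p * ((x + 1) * x) ^ ((p - 1) / 2)) ^ 2 := by
        rw [one_mul]; exact pow_le_pow_left₀ hD.le hle 2
    _ = p * ((x + 1) * x) ^ (p - 1) * p := by rw [mul_pow, hsq]; ring

/-- For every real `t > 0` and real `0 < p ≤ 1`,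
`(t+2)^p/((t+2)^p − (t+1)^p) ≥ (t+1)^p/((t+1)^p − t^p) + 1/p`. -/
theorem stmt_5 (t p : ℝ) (ht : 0 < t) (hp0 : 0 < p) (hp1 : p ≤ 1) :
    (t + 2) ^ p / ((t + 2) ^ p - (t + 1) ^ p) ≥
      (t + 1) ^ p / ((t + 1) ^ p - t ^ p) + 1 / p := by
  set f : ℝ → ℝ := fun y => (y + 1) ^ p / ((y + 1) ^ p - y ^ p)
  have hf' : ∀ x ∈ Ioi (0 : ℝ),
      HasDerivAt f (p * ((x + 1) * x) ^ (p - 1) / ((x + 1) ^ p - x ^ p) ^ 2) x :=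
    fun x hx => hasDerivAt_rpow_div_rpow_sub_rpow hp0 hx
  obtain ⟨c, hc, hslope⟩ := exists_hasDerivAt_eq_slope f _ (lt_add_one t)
    (fun x hx => (hf' x (ht.trans_le hx.1)).continuousAt.continuousWithinAt)
    (fun x hx => hf' x (ht.trans hx.1))
  have hslope_ge := one_div_le_deriv_rpow_div_rpow_sub_rpow hp0 hp1 (ht.trans hc.1)
  rw [hslope, add_sub_cancel_left, div_one] at hslope_ge
  rw [show t + 2 = t + 1 + 1 by ring]
  change f (t + 1) ≥ f t + 1 / p
  linarith
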